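/- Let M_Q be the 2×2 matrix [[−Y, X],[0,1]] over R₁₂ (its determinant −Y is a unit of R₁₂, so M_Q is invertible over R₁₂). There do not exist 2×2 matrices L and R, invertible over R₁₂, with all entries of L and L⁻¹ lying in A₂ and all entries of R and R⁻¹ lying in A₁, such that L·M_Q·R is a diagonal matrix. (This expresses that the Quillen bundle on the real anisotropic conic is indecomposable.) -/

import Mathlib

noncomputable section

/-- The coordinate ring `R₁ = ℝ[X,Y]/(X²+Y²+1)` of the affine open `U₁ = D₊(z)` of the
real anisotropic conic `C = V(x²+y²+z²) ⊂ ℙ²_ℝ`. -/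
def R1 : Type :=
  MvPolynomial (Fin 2) ℝ ⧸
    Ideal.span {(MvPolynomial.X 0 : MvPolynomial (Fin 2) ℝ) ^ 2 + MvPolynomial.X 1 ^ 2 + 1}

instance : CommRing R1 := Ideal.Quotient.commRing _
instance : Algebra ℝ R1 := Ideal.Quotient.algebra ℝ

/-- `X`, the image of the first variable in `R₁` (the rational function `x/z`). -/
def X1 : R1 := Ideal.Quotient.mk _ (MvPolynomial.X 0)

/-- `Y`, the image of the second variable in `R₁` (the rational function `y/z`). -/
def Y1 : R1 := Ideal.Quotient.mk _ (MvPolynomial.X 1)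

/-- `R₁₂ = R₁[Y⁻¹]`, the localization of `R₁` away from `Y`: the coordinate ring of
`U₁ ∩ U₂` where `U₂ = D₊(y)`. -/
abbrev R12 : Type := Localization.Away Y1

/-- The image of `X` in `R₁₂`. -/
def X12 : R12 := algebraMap R1 R12 X1

/-- The image of `Y` in `R₁₂`. -/
def Y12 : R12 := algebraMap R1 R12 Y1

/-- `Y` as a unit of `R₁₂`. -/
def Yu : R12ˣ := (IsLocalization.Away.algebraMap_isUnit (S := R12) Y1).unit

/-- `A₁`, the image of `R₁` in `R₁₂`: the `ℝ`-subalgebra generated by `X` and `Y`. -/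
def A1 : Subalgebra ℝ R12 := Algebra.adjoin ℝ {X12, Y12}

/-- `A₂`, the `ℝ`-subalgebra of `R₁₂` generated by `X·Y⁻¹` (i.e. `x/y`) and `Y⁻¹`
(i.e. `z/y`); it is isomorphic to the coordinate ring `R₂` of `U₂`. -/
def A2 : Subalgebra ℝ R12 := Algebra.adjoin ℝ {X12 * (↑Yu⁻¹ : R12), (↑Yu⁻¹ : R12)}

/-- The transition matrix `M_Q = [[−Y, X],[0,1]]` of the Quillen bundle. -/
def MQ : Matrix (Fin 2) (Fin 2) R12 := !![-Y12, X12; 0, 1]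


namespace St10

open Polynomial

abbrev K : Type := RatFunc ℂ

abbrev am : Polynomial ℂ →+* K := algebraMap (Polynomial ℂ) K

lemma am_inj : Function.Injective am := IsFractionRing.injective _ _

lemma am_ne_zero {p : Polynomial ℂ} (hp : p ≠ 0) : am p ≠ 0 := by
  intro h
  exact hp (am_inj (by simpa using h))

def tt : K := am Polynomial.X

lemma tt_ne_zero : tt ≠ 0 := am_ne_zero X_ne_zero

/-- constants in K -/
def kC (a : ℂ) : K := am (C a)

lemma kC_ne_zero {a : ℂ} (ha : a ≠ 0) : kC a ≠ 0 := am_ne_zero (by simpa using ha)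

lemma kC_inj : Function.Injective kC := fun a b h => by
  have := am_inj h
  simpa using this

lemma kC_mul (a b : ℂ) : kC (a*b) = kC a * kC b := by simp [kC, map_mul]

/-- order of vanishing of `f` at `a` (junk value at `f = 0`). -/
def ord (a : ℂ) (f : K) : ℤ :=
  (f.num.rootMultiplicity a : ℤ) - f.denom.rootMultiplicity a

/-- minus the "degree at infinity": `W f = deg denom - deg num`. -/
def W (f : K) : ℤ := (f.denom.natDegree : ℤ) - f.num.natDegree

lemma self_rep (f : K) : f * am f.denom = am f.num := by
  nth_rewrite 1 [← RatFunc.num_div_denom f]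
  rw [div_mul_cancel₀ _ (am_ne_zero f.denom_ne_zero)]

lemma rm_one (a : ℂ) : rootMultiplicity a (1 : Polynomial ℂ) = 0 :=
  rootMultiplicity_eq_zero (by simp [IsRoot])

/-- compute `ord` and `W` from any fraction representation -/
lemma rep_spec (a : ℂ) {f : K} {p q : Polynomial ℂ} (hq : q ≠ 0)
    (h : f * am q = am p) (hf : f ≠ 0) :
    ord a f = (p.rootMultiplicity a : ℤ) - q.rootMultiplicity a ∧
      W f = (q.natDegree : ℤ) - p.natDegree := by
  have hp : p ≠ 0 := by
    intro h0; subst h0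
    simp only [map_zero] at h
    rcases mul_eq_zero.mp h with h' | h'
    · exact hf h'
    · exact am_ne_zero hq h'
  have hnum : f.num ≠ 0 := RatFunc.num_ne_zero hf
  have hden : f.denom ≠ 0 := f.denom_ne_zero
  have key : f.num * q = p * f.denom := by
    apply am_inj
    rw [map_mul, map_mul, ← self_rep f]
    rw [mul_comm (f * am f.denom) (am q), ← mul_assoc, mul_comm (am q) f, h]
  have h1 : (f.num * q).rootMultiplicity a = (p * f.denom).rootMultiplicity a := by rw [key]
  have h2 : (f.num * q).natDegree = (p * f.denom).natDegree := by rw [key]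
  rw [rootMultiplicity_mul (mul_ne_zero hnum hq), rootMultiplicity_mul (mul_ne_zero hp hden)] at h1
  rw [natDegree_mul hnum hq, natDegree_mul hp hden] at h2
  constructor
  · unfold ord; omega
  · unfold W; omega

lemma ord_rep (a : ℂ) {f : K} {p q : Polynomial ℂ} (hq : q ≠ 0)
    (h : f * am q = am p) (hf : f ≠ 0) :
    ord a f = (p.rootMultiplicity a : ℤ) - q.rootMultiplicity a :=
  (rep_spec a hq h hf).1

lemma W_rep {f : K} {p q : Polynomial ℂ} (hq : q ≠ 0)
    (h : f * am q = am p) (hf : f ≠ 0) :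
    W f = (q.natDegree : ℤ) - p.natDegree :=
  (rep_spec 0 hq h hf).2

lemma ord_am (a : ℂ) {p : Polynomial ℂ} (hp : p ≠ 0) :
    ord a (am p) = p.rootMultiplicity a := by
  have := ord_rep a (q := 1) (p := p) one_ne_zero (by simp) (am_ne_zero hp)
  simpa [rm_one] using this

lemma ord_mul (a : ℂ) {f g : K} (hf : f ≠ 0) (hg : g ≠ 0) :
    ord a (f * g) = ord a f + ord a g := by
  have hrep : (f * g) * am (f.denom * g.denom) = am (f.num * g.num) := by
    rw [map_mul, map_mul]
    calc f * g * (am f.denom * am g.denom) = (f * am f.denom) * (g * am g.denom) := by ring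
    _ = am f.num * am g.num := by rw [self_rep, self_rep]
  have h := ord_rep a (mul_ne_zero f.denom_ne_zero g.denom_ne_zero) hrep (mul_ne_zero hf hg)
  rw [rootMultiplicity_mul (mul_ne_zero (RatFunc.num_ne_zero hf) (RatFunc.num_ne_zero hg)),
    rootMultiplicity_mul (mul_ne_zero f.denom_ne_zero g.denom_ne_zero)] at h
  unfold ord at *
  omega

lemma W_mul {f g : K} (hf : f ≠ 0) (hg : g ≠ 0) :
    W (f * g) = W f + W g := by
  have hrep : (f * g) * am (f.denom * g.denom) = am (f.num * g.num) := by
    rw [map_mul, map_mul]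
    calc f * g * (am f.denom * am g.denom) = (f * am f.denom) * (g * am g.denom) := by ring
    _ = am f.num * am g.num := by rw [self_rep, self_rep]
  have h := W_rep (mul_ne_zero f.denom_ne_zero g.denom_ne_zero) hrep (mul_ne_zero hf hg)
  rw [natDegree_mul (RatFunc.num_ne_zero hf) (RatFunc.num_ne_zero hg),
    natDegree_mul f.denom_ne_zero g.denom_ne_zero] at h
  unfold W at *
  omega

lemma ord_one (a : ℂ) : ord a (1 : K) = 0 := by
  have := ord_rep a (q := 1) (p := 1) one_ne_zero (by simp) one_ne_zero
  simpa [rootMultiplicity_C] using this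

lemma ord_kC (a : ℂ) {c : ℂ} (hc : c ≠ 0) : ord a (kC c) = 0 := by
  have := ord_rep a (q := 1) (p := C c) one_ne_zero (by simp [kC]) (kC_ne_zero hc)
  simpa [rm_one, rootMultiplicity_C] using this

lemma ord_neg (a : ℂ) {f : K} (hf : f ≠ 0) : ord a (-f) = ord a f := by
  have h1 : (-1 : K) = kC (-1) := by simp [kC, map_neg]
  have : (-f) = kC (-1) * f := by rw [← h1]; ring
  rw [this, ord_mul a (kC_ne_zero (by norm_num)) hf, ord_kC a (by norm_num)]
  ring

lemma ord_inv (a : ℂ) {f : K} (hf : f ≠ 0) : ord a f⁻¹ = - ord a f := by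
  have : ord a (f⁻¹ * f) = ord a f⁻¹ + ord a f := ord_mul a (inv_ne_zero hf) hf
  rw [inv_mul_cancel₀ hf, ord_one] at this
  omega

lemma ord_add_ge (a : ℂ) {f g : K} (hf : f ≠ 0) (hg : g ≠ 0) (hfg : f + g ≠ 0) :
    min (ord a f) (ord a g) ≤ ord a (f + g) := by
  set p : Polynomial ℂ := f.num * g.denom + g.num * f.denom with hp
  have hrep : (f + g) * am (f.denom * g.denom) = am p := by
    rw [hp, map_add, map_mul, map_mul, map_mul]
    calc (f + g) * (am f.denom * am g.denom)
        = (f * am f.denom) * am g.denom + (g * am g.denom) * am f.denom := by ring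
    _ = _ := by rw [self_rep, self_rep]
  have hfd := f.denom_ne_zero
  have hgd := g.denom_ne_zero
  have hnf := RatFunc.num_ne_zero hf
  have hng := RatFunc.num_ne_zero hg
  have hpne : p ≠ 0 := by
    intro h0
    rw [h0, map_zero] at hrep
    exact (mul_eq_zero.mp hrep).elim hfg (fun h => am_ne_zero (mul_ne_zero hfd hgd) h)
  have hmin := rootMultiplicity_add (p := f.num * g.denom) (q := g.num * f.denom) a
    (by rw [← hp]; exact hpne)
  rw [rootMultiplicity_mul (mul_ne_zero hnf hgd), rootMultiplicity_mul (mul_ne_zero hng hfd)]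
    at hmin
  have h1 := ord_rep a (mul_ne_zero hfd hgd) hrep hfg
  rw [rootMultiplicity_mul (mul_ne_zero hfd hgd)] at h1
  have h2 := ord_rep a hfd (self_rep f) hf
  have h3 := ord_rep a hgd (self_rep g) hg
  rw [← hp] at hmin
  rw [min_def] at hmin ⊢
  split_ifs at hmin ⊢ <;> omega

lemma ord_add_eq (a : ℂ) {f g : K} (hf : f ≠ 0) (hg : g ≠ 0)
    (hne : ord a f < ord a g) : ord a (f + g) = ord a f := by
  have hfg : f + g ≠ 0 := by
    intro h0
    have : g = -f := by linear_combination h0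
    rw [this, ord_neg a hf] at hne
    omega
  have hge := ord_add_ge a hf hg hfg
  have hle : ord a f ≥ ord a (f+g) := by
    have hrw : f = (f + g) + (-g) := by ring
    have h2 := ord_add_ge a hfg (neg_ne_zero.mpr hg) (by rw [← hrw]; exact hf)
    rw [← hrw, ord_neg a hg] at h2
    omega
  omega


/-! ### linear factor induction over ℂ -/

lemma linear_factor_ind {Q : Polynomial ℂ → Prop}
    (h0 : ∀ a : ℂ, a ≠ 0 → Q (C a))
    (hstep : ∀ (r : ℂ) (q : Polynomial ℂ), q ≠ 0 → Q q → Q ((X - C r) * q)) :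
    ∀ p : Polynomial ℂ, p ≠ 0 → Q p := by
  suffices H : ∀ (n : ℕ) (p : Polynomial ℂ), p.natDegree ≤ n → p ≠ 0 → Q p from
    fun p hp => H p.natDegree p le_rfl hp
  intro n
  induction n with
  | zero =>
    intro p hdeg hp
    obtain ⟨a, rfl⟩ := natDegree_eq_zero.mp (Nat.le_zero.mp hdeg)
    exact h0 a (by simpa using hp)
  | succ n ih =>
    intro p hdeg hp
    by_cases hd0 : p.natDegree = 0
    · obtain ⟨a, rfl⟩ := natDegree_eq_zero.mp hd0
      exact h0 a (by simpa using hp)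
    · obtain ⟨r, hr⟩ := Complex.exists_root (natDegree_pos_iff_degree_pos.mp (Nat.pos_of_ne_zero hd0))
      obtain ⟨q, hq⟩ := dvd_iff_isRoot.mpr hr
      have hqne : q ≠ 0 := by rintro rfl; rw [mul_zero] at hq; exact hp hq
      have hdq : q.natDegree ≤ n := by
        have h1 := natDegree_mul (X_sub_C_ne_zero r) hqne
        rw [← hq, natDegree_X_sub_C] at h1
        omega
      rw [hq]
      exact hstep r q hqne (ih q hdq hqne)

/-! ### the twisted conjugation `cj : f(t) ↦ conj-coeffs f (-1/t)` -/

def fCK : ℂ →+* K := am.comp ((Polynomial.C : ℂ →+* Polynomial ℂ).comp (starRingEnd ℂ))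

def g0 : Polynomial ℂ →+* K := eval₂RingHom fCK (-tt⁻¹)

lemma g0_C (a : ℂ) : g0 (C a) = kC (starRingEnd ℂ a) := by
  simp [g0, fCK, kC, eval₂RingHom]

lemma g0_X : g0 X = -tt⁻¹ := by simp [g0]

lemma Pr_ne_zero (r : ℂ) : -(C (starRingEnd ℂ r) * X + 1) ≠ 0 := fun h => by
  simpa using congrArg (Polynomial.eval 0) h

lemma g0_linear (r : ℂ) :
    g0 (X - C r) * tt = am (-(C (starRingEnd ℂ r) * X + 1)) := by
  rw [map_sub, g0_X, g0_C, map_neg, map_add, map_mul, map_one]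
  show (-tt⁻¹ - kC (starRingEnd ℂ r)) * tt = -(kC (starRingEnd ℂ r) * tt + 1)
  rw [sub_mul, neg_mul, inv_mul_cancel₀ tt_ne_zero]
  ring

lemma g0_linear_ne_zero (r : ℂ) : g0 (X - C r) ≠ 0 := by
  intro h
  have h2 := g0_linear r
  rw [h, zero_mul] at h2
  exact am_ne_zero (Pr_ne_zero r) h2.symm

lemma g0_ne_zero : ∀ p : Polynomial ℂ, p ≠ 0 → g0 p ≠ 0 := by
  apply linear_factor_ind
  · intro a ha
    rw [g0_C]
    exact kC_ne_zero (by simpa using ha)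
  · intro r q hq hQ
    rw [map_mul]
    exact mul_ne_zero (g0_linear_ne_zero r) hQ

lemma g0_inj : Function.Injective g0 :=
  (injective_iff_map_eq_zero' g0).mpr (fun p => ⟨fun h => by
    by_contra hp; exact g0_ne_zero p hp h, fun h => by rw [h, map_zero]⟩)

def cj : K →+* K := IsFractionRing.lift (g := g0) g0_inj

lemma cj_am (p : Polynomial ℂ) : cj (am p) = g0 p :=
  IsFractionRing.lift_algebraMap g0_inj p

lemma cj_inj : Function.Injective cj := cj.injective

lemma cj_ne_zero {f : K} (hf : f ≠ 0) : cj f ≠ 0 := fun h => hf (cj_inj (by rwa [map_zero]))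

lemma cj_tt : cj tt = -tt⁻¹ := by
  have : cj (am X) = g0 X := cj_am X
  rw [g0_X] at this
  exact this

lemma cj_kC (a : ℂ) : cj (kC a) = kC (starRingEnd ℂ a) := by rw [kC, cj_am, g0_C]

/-- order at `I` and at `0` of the basic factor `g0 (X - C r)` -/
lemma ord_g0_linear (r : ℂ) :
    ord Complex.I (g0 (X - C r)) = (X - C r).rootMultiplicity (-Complex.I) ∧
      ord 0 (g0 (X - C r)) = -(1 : ℤ) := by
  have hP := Pr_ne_zero r
  have hrep := g0_linear r
  have hA : g0 (X - C r) ≠ 0 := g0_linear_ne_zero r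
  have hordI := ord_rep Complex.I (p := -(C (starRingEnd ℂ r) * X + 1)) (q := X) X_ne_zero hrep hA
  have hord0 := ord_rep 0 (p := -(C (starRingEnd ℂ r) * X + 1)) (q := X) X_ne_zero hrep hA
  have hX_I : (X : Polynomial ℂ).rootMultiplicity Complex.I = 0 :=
    rootMultiplicity_eq_zero (by simp [IsRoot, Complex.I_ne_zero])
  have hX_0 : (X : Polynomial ℂ).rootMultiplicity 0 = 1 := by
    simpa using rootMultiplicity_X_sub_C_self (x := (0 : ℂ))
  have hP0 : (-(C (starRingEnd ℂ r) * X + 1)).rootMultiplicity 0 = 0 :=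
    rootMultiplicity_eq_zero (by simp [IsRoot])
  constructor
  · by_cases hcase : r = -Complex.I
    · have hfac : -(C (starRingEnd ℂ r) * X + 1) = (-C Complex.I) * (X - C Complex.I) := by
        subst hcase
        have hcj : (starRingEnd ℂ) (-Complex.I) = Complex.I := by simp
        rw [hcj]
        have hII : (C Complex.I : Polynomial ℂ) ^ 2 = -1 := by
          rw [← C_pow, Complex.I_sq, map_neg, map_one]
        have h2 : (-C Complex.I) * ((X : Polynomial ℂ) - C Complex.I) =
            -(C Complex.I * X) + C Complex.I ^ 2 := by ring
        rw [h2, hII]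
        ring
      have hPI : (-(C (starRingEnd ℂ r) * X + 1)).rootMultiplicity Complex.I = 1 := by
        rw [hfac, rootMultiplicity_mul (by
          apply mul_ne_zero
          · simpa using Complex.I_ne_zero
          · exact X_sub_C_ne_zero _), rootMultiplicity_eq_zero (by simp [IsRoot, Complex.I_ne_zero]),
          rootMultiplicity_X_sub_C_self]
      have hrm : (X - C r).rootMultiplicity (-Complex.I) = 1 := by
        subst hcase; exact rootMultiplicity_X_sub_C_self
      rw [hordI, hPI, hrm, hX_I]
      norm_num
    · have hPI : (-(C (starRingEnd ℂ r) * X + 1)).rootMultiplicity Complex.I = 0 := by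
        apply rootMultiplicity_eq_zero
        simp only [IsRoot, eval_neg, eval_add, eval_mul, eval_C, eval_X, eval_one, neg_eq_zero]
        intro h
        apply hcase
        have hI2 := Complex.I_mul_I
        have h2 : (starRingEnd ℂ) r = Complex.I := by
          linear_combination (-Complex.I) * h + (starRingEnd ℂ) r * hI2
        have h3 := congrArg (starRingEnd ℂ) h2
        simpa using h3
      have hrm : (X - C r).rootMultiplicity (-Complex.I) = 0 := by
        apply rootMultiplicity_eq_zero
        simp only [IsRoot, eval_sub, eval_X, eval_C]
        intro h
        exact hcase (by linear_combination -h)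
      rw [hordI, hPI, hrm, hX_I]
      norm_num
  · rw [hord0, hP0, hX_0]
    norm_num

lemma cj_ord_poly : ∀ p : Polynomial ℂ, p ≠ 0 →
    (ord Complex.I (cj (am p)) = p.rootMultiplicity (-Complex.I) ∧
      ord 0 (cj (am p)) = -(p.natDegree : ℤ)) := by
  apply linear_factor_ind
  · intro a ha
    rw [cj_am, g0_C]
    constructor
    · rw [ord_kC _ (by simpa using ha)]
      simp [rootMultiplicity_C]
    · rw [ord_kC _ (by simpa using ha)]
      simp
  · intro r q hq ih
    have hgq : g0 q ≠ 0 := g0_ne_zero q hq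
    have hgl : g0 (X - C r) ≠ 0 := g0_linear_ne_zero r
    rw [cj_am, map_mul] at *
    have hI := ord_mul Complex.I hgl hgq
    have h0' := ord_mul 0 hgl hgq
    have hlin := ord_g0_linear r
    constructor
    · rw [hI, hlin.1, ih.1,
        rootMultiplicity_mul (mul_ne_zero (X_sub_C_ne_zero r) hq)]
      push_cast
      ring
    · rw [h0', hlin.2, ih.2, natDegree_mul (X_sub_C_ne_zero r) hq, natDegree_X_sub_C]
      push_cast
      ring

lemma cj_ord {f : K} (hf : f ≠ 0) :
    ord Complex.I (cj f) = ord (-Complex.I) f ∧ ord 0 (cj f) = W f := by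
  have hnum := RatFunc.num_ne_zero hf
  have hden := f.denom_ne_zero
  have h1 : cj f * cj (am f.denom) = cj (am f.num) := by
    rw [← map_mul, self_rep]
  have hcjden : cj (am f.denom) ≠ 0 := cj_ne_zero (am_ne_zero hden)
  have hcjnum : cj (am f.num) ≠ 0 := cj_ne_zero (am_ne_zero hnum)
  have hcjf : cj f ≠ 0 := cj_ne_zero hf
  have hnum' := cj_ord_poly f.num hnum
  have hden' := cj_ord_poly f.denom hden
  constructor
  · have hthis := ord_mul Complex.I hcjf hcjden
    rw [h1, hnum'.1, hden'.1] at hthis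
    have hgoal : ord (-Complex.I) f =
        (f.num.rootMultiplicity (-Complex.I) : ℤ) - f.denom.rootMultiplicity (-Complex.I) := rfl
    rw [hgoal]
    omega
  · have hthis := ord_mul 0 hcjf hcjden
    rw [h1, hnum'.2, hden'.2] at hthis
    have hgoal : W f = (f.denom.natDegree : ℤ) - f.num.natDegree := rfl
    rw [hgoal]
    omega

lemma real_ord {f : K} (hf : f ≠ 0) (hr : cj f = f) :
    ord (-Complex.I) f = ord Complex.I f ∧ W f = ord 0 f := by
  have h := cj_ord hf
  rw [hr] at h
  exact ⟨h.1.symm, h.2.symm⟩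


/-! ### the conic functions xx, yy -/

def px : Polynomial ℂ := C (2⁻¹ : ℂ) * (X^2 - 1)
def py : Polynomial ℂ := C ((2 * Complex.I)⁻¹) * (X^2 + 1)
def qq : Polynomial ℂ := X^2 + 1

lemma twoI_ne_zero : (2 * Complex.I : ℂ) ≠ 0 := by
  simp [Complex.I_ne_zero]

lemma px_ne_zero : px ≠ 0 := fun h => by
  have := congrArg (Polynomial.eval 0) h
  simp [px] at this
lemma py_ne_zero : py ≠ 0 := fun h => by
  have := congrArg (Polynomial.eval 0) h
  simp [py, twoI_ne_zero] at this
lemma qq_ne_zero : qq ≠ 0 := fun h => by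
  have := congrArg (Polynomial.eval 0) h
  simp [qq] at this

def xx : K := am px / tt
def yy : K := am py / tt

lemma xx_rep : xx * tt = am px := div_mul_cancel₀ _ tt_ne_zero
lemma yy_rep : yy * tt = am py := div_mul_cancel₀ _ tt_ne_zero

lemma xx_ne_zero : xx ≠ 0 := div_ne_zero (am_ne_zero px_ne_zero) tt_ne_zero
lemma yy_ne_zero : yy ≠ 0 := div_ne_zero (am_ne_zero py_ne_zero) tt_ne_zero

lemma am_px : am px = kC 2⁻¹ * (tt^2 - 1) := by
  rw [px, map_mul, map_sub, map_pow, map_one]; rfl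
lemma am_py : am py = kC ((2 * Complex.I)⁻¹) * (tt^2 + 1) := by
  rw [py, map_mul, map_add, map_pow, map_one]; rfl
lemma am_qq : am qq = tt^2 + 1 := by
  rw [qq, map_add, map_pow, map_one]; rfl

lemma kC_I_sq : kC Complex.I * kC Complex.I = -1 := by
  rw [← kC_mul, Complex.I_mul_I, kC, map_neg, map_one, map_neg, map_one]

lemma poly_conic : px^2 + py^2 + X^2 = 0 := by
  have e2 : ((2*Complex.I)⁻¹)^2 = -(4⁻¹ : ℂ) := by
    rw [inv_pow, mul_pow, Complex.I_sq]
    norm_num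
  unfold px py
  rw [mul_pow, mul_pow, ← C_pow, ← C_pow, e2]
  have e1 : ((2 : ℂ)⁻¹)^2 = (4⁻¹ : ℂ) := by norm_num
  rw [e1, map_neg]
  have h4 : (C (4⁻¹ : ℂ)) * 4 = 1 := by
    rw [show (4 : Polynomial ℂ) = C (4 : ℂ) from (map_ofNat C 4).symm, ← C_mul]
    norm_num
  linear_combination (-(X^2 : Polynomial ℂ)) * h4

lemma conic : xx^2 + yy^2 + 1 = 0 := by
  have h : am px ^ 2 + am py ^ 2 + tt^2 = 0 := by
    rw [tt, ← map_pow, ← map_pow, ← map_pow, ← map_add, ← map_add, poly_conic, map_zero]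
  have h2 : (tt:K)^2 ≠ 0 := pow_ne_zero _ tt_ne_zero
  calc xx^2 + yy^2 + 1 = (am px ^ 2 + am py ^ 2 + tt ^ 2) / tt ^ 2 := by
        rw [xx, yy, div_pow, div_pow]
        field_simp
        rw [div_add_one h2]
  _ = 0 := by rw [h, zero_div]

/-! ### the homomorphism φ : R12 → K -/

def rC : ℝ →+* K := (am.comp (Polynomial.C : ℂ →+* Polynomial ℂ)).comp (algebraMap ℝ ℂ)

lemma rC_eq (r : ℝ) : rC r = kC r := rfl

def psi : MvPolynomial (Fin 2) ℝ →+* K := MvPolynomial.eval₂Hom rC ![xx, yy]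

lemma psi_X0 : psi (MvPolynomial.X 0) = xx := by simp [psi]
lemma psi_X1 : psi (MvPolynomial.X 1) = yy := by simp [psi]
lemma psi_C (r : ℝ) : psi (MvPolynomial.C r) = kC r := by simp [psi, rC_eq]

def Irel : Ideal (MvPolynomial (Fin 2) ℝ) :=
  Ideal.span {(MvPolynomial.X 0 : MvPolynomial (Fin 2) ℝ) ^ 2 + MvPolynomial.X 1 ^ 2 + 1}

lemma psi_vanish : ∀ a ∈ Irel, psi a = 0 := by
  intro a ha
  obtain ⟨c, rfl⟩ := Ideal.mem_span_singleton.mp ha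
  rw [map_mul]
  have : psi ((MvPolynomial.X 0 : MvPolynomial (Fin 2) ℝ) ^ 2 + MvPolynomial.X 1 ^ 2 + 1) = 0 := by
    rw [map_add, map_add, map_pow, map_pow, map_one, psi_X0, psi_X1]
    exact conic
  rw [this, zero_mul]

def psi1 : R1 →+* K := Ideal.Quotient.lift Irel psi psi_vanish

lemma psi1_mk (p : MvPolynomial (Fin 2) ℝ) :
    psi1 (Ideal.Quotient.mk Irel p) = psi p := Ideal.Quotient.lift_mk Irel psi psi_vanish

lemma psi1_X : psi1 X1 = xx := by rw [X1]; exact (psi1_mk _).trans psi_X0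
lemma psi1_Y : psi1 Y1 = yy := by rw [Y1]; exact (psi1_mk _).trans psi_X1

def phi : R12 →+* K :=
  IsLocalization.Away.lift (g := psi1) Y1
    (by rw [psi1_Y]; exact isUnit_iff_ne_zero.mpr yy_ne_zero)

lemma phi_alg (r : R1) : phi (algebraMap R1 R12 r) = psi1 r :=
  IsLocalization.Away.lift_eq Y1 _ r

lemma phi_X12 : phi X12 = xx := by rw [X12, phi_alg, psi1_X]
lemma phi_Y12 : phi Y12 = yy := by rw [Y12, phi_alg, psi1_Y]

lemma phi_Yu : phi (Yu : R12) = yy := by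
  rw [Yu, IsUnit.unit_spec, phi_alg, psi1_Y]

lemma phi_Yuinv : phi ((Yu⁻¹ : R12ˣ) : R12) = yy⁻¹ := by
  have h : phi ((Yu : R12) * ((Yu⁻¹ : R12ˣ) : R12)) = 1 := by
    rw [Units.mul_inv]; exact map_one phi
  rw [map_mul, phi_Yu] at h
  exact eq_inv_of_mul_eq_one_right h

lemma phi_real (r : ℝ) : phi (algebraMap ℝ R12 r) = kC r := by
  rw [IsScalarTower.algebraMap_apply ℝ R1 R12, phi_alg]
  have h1 : algebraMap ℝ R1 r = Ideal.Quotient.mk Irel (MvPolynomial.C r) := rfl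
  rw [h1, psi1_mk, psi_C]

/-! ### reality of φ -/

lemma cj_xx : cj xx = xx := by
  rw [xx, am_px, map_div₀, map_mul, map_sub, map_pow, map_one, cj_tt, cj_kC]
  have hc : (starRingEnd ℂ) (2⁻¹ : ℂ) = 2⁻¹ := by
    rw [map_inv₀, map_ofNat]
  rw [hc, div_eq_div_iff (by simp [tt_ne_zero]) tt_ne_zero]
  field_simp
  have h1 : tt⁻¹ * tt = 1 := inv_mul_cancel₀ tt_ne_zero
  linear_combination (kC (1/2) * (tt + tt⁻¹)) * h1

lemma cj_yy : cj yy = yy := by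
  rw [yy, am_py, map_div₀, map_mul, map_add, map_pow, map_one, cj_tt, cj_kC]
  have hc : (starRingEnd ℂ) ((2 * Complex.I)⁻¹ : ℂ) = -(2 * Complex.I)⁻¹ := by
    rw [map_inv₀, map_mul, Complex.conj_I, map_ofNat, mul_neg, inv_neg]
  have hkc : kC (-(2 * Complex.I)⁻¹) = -kC ((2 * Complex.I)⁻¹) := by
    rw [kC, kC, map_neg, map_neg]
  rw [hc, hkc, div_eq_div_iff (by simp [tt_ne_zero]) tt_ne_zero]
  field_simp
  have h1 : tt⁻¹ * tt = 1 := inv_mul_cancel₀ tt_ne_zero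
  linear_combination (kC (1/(2*Complex.I)) * (tt - tt⁻¹)) * h1

lemma cj_kC_real (r : ℝ) : cj (kC r) = kC r := by
  rw [cj_kC, Complex.conj_ofReal]

lemma cj_phi (z : R12) : cj (phi z) = phi z := by
  have key : cj.comp phi = phi := by
    apply IsLocalization.ringHom_ext (Submonoid.powers Y1)
    have hcomp : phi.comp (algebraMap R1 R12) = psi1 :=
      IsLocalization.Away.lift_comp _ _
    rw [RingHom.comp_assoc, hcomp]
    apply Ideal.Quotient.ringHom_ext
    apply MvPolynomial.ringHom_ext
    · intro r
      show cj (psi1 (Ideal.Quotient.mk Irel (MvPolynomial.C r))) =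
        psi1 (Ideal.Quotient.mk Irel (MvPolynomial.C r))
      rw [psi1_mk, psi_C, cj_kC_real]
    · intro i
      show cj (psi1 (Ideal.Quotient.mk Irel (MvPolynomial.X i))) =
        psi1 (Ideal.Quotient.mk Irel (MvPolynomial.X i))
      rw [psi1_mk]
      fin_cases i
      · show cj (psi (MvPolynomial.X 0)) = psi (MvPolynomial.X 0)
        rw [psi_X0, cj_xx]
      · show cj (psi (MvPolynomial.X 1)) = psi (MvPolynomial.X 1)
        rw [psi_X1, cj_yy]
  exact congrFun (congrArg DFunLike.coe key) z


/-! ### representation predicates -/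

def Rep1 (f : K) : Prop :=
  ∃ (P : Polynomial ℂ) (a : ℕ), f * tt^a = am P ∧ P.natDegree ≤ 2*a
def Rep2 (f : K) : Prop :=
  ∃ (P : Polynomial ℂ) (b : ℕ), f * (am qq)^b = am P ∧ P.natDegree ≤ 2*b
def Rep12 (f : K) : Prop :=
  ∃ (P : Polynomial ℂ) (a b : ℕ), f * tt^a * (am qq)^b = am P ∧ P.natDegree ≤ 2*a + 2*b

lemma tt_pow (a : ℕ) : (tt:K)^a = am (X^a) := by rw [map_pow]; rfl

lemma px_deg : px.natDegree ≤ 2 := by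
  apply le_trans natDegree_mul_le
  rw [natDegree_C, zero_add]
  refine le_trans (natDegree_sub_le _ _) ?_
  simp

lemma py_deg : py.natDegree ≤ 2 := by
  apply le_trans natDegree_mul_le
  rw [natDegree_C, zero_add]
  refine le_trans (natDegree_add_le _ _) ?_
  simp

lemma qq_deg : qq.natDegree = 2 := by
  rw [qq, show ((1:Polynomial ℂ)) = C 1 from (map_one C).symm, natDegree_X_pow_add_C]

lemma qq_pow_deg (n : ℕ) : (qq^n).natDegree = 2*n := by
  rw [natDegree_pow, qq_deg]; ring
lemma amqq_pow (b : ℕ) : ((am qq : K))^b = am (qq^b) := by rw [map_pow]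

lemma Rep1.rep12 {f : K} : Rep1 f → Rep12 f := fun ⟨P, a, h, hd⟩ =>
  ⟨P, a, 0, by simpa using h, by omega⟩
lemma Rep2.rep12 {f : K} : Rep2 f → Rep12 f := fun ⟨P, b, h, hd⟩ =>
  ⟨P, 0, b, by simpa using h, by omega⟩

lemma Rep1.add {f g : K} : Rep1 f → Rep1 g → Rep1 (f + g) := by
  rintro ⟨P, a, h, hd⟩ ⟨Q, b, h', hd'⟩
  refine ⟨P * X^b + Q * X^a, a + b, ?_, ?_⟩
  · rw [map_add, map_mul, map_mul, ← tt_pow, ← tt_pow, pow_add, add_mul, ← h, ← h']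
    ring
  · apply le_trans (natDegree_add_le _ _)
    simp only [max_le_iff]
    constructor
    · apply le_trans (natDegree_mul_le)
      rw [natDegree_X_pow]; omega
    · apply le_trans (natDegree_mul_le)
      rw [natDegree_X_pow]; omega

lemma Rep1.mul {f g : K} : Rep1 f → Rep1 g → Rep1 (f * g) := by
  rintro ⟨P, a, h, hd⟩ ⟨Q, b, h', hd'⟩
  refine ⟨P * Q, a + b, ?_, ?_⟩
  · rw [map_mul, pow_add, ← h, ← h']; ring
  · apply le_trans (natDegree_mul_le); omega

lemma Rep1.kc (c : ℂ) : Rep1 (kC c) := ⟨C c, 0, by simp [kC], by simp⟩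

lemma Rep1.xx : Rep1 xx := ⟨px, 1, by simpa using xx_rep, by simpa using px_deg⟩

lemma Rep1.yy : Rep1 yy := ⟨py, 1, by simpa using yy_rep, by simpa using py_deg⟩

lemma Rep2.add {f g : K} : Rep2 f → Rep2 g → Rep2 (f + g) := by
  rintro ⟨P, a, h, hd⟩ ⟨Q, b, h', hd'⟩
  refine ⟨P * qq^b + Q * qq^a, a + b, ?_, ?_⟩
  · rw [map_add, map_mul, map_mul, ← amqq_pow, ← amqq_pow, pow_add, add_mul, ← h, ← h']
    ring
  · have hqdeg : ∀ n : ℕ, (qq^n).natDegree ≤ 2*n := fun n => le_of_eq (qq_pow_deg n)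
    apply le_trans (natDegree_add_le _ _)
    simp only [max_le_iff]
    constructor
    · apply le_trans (natDegree_mul_le)
      have := hqdeg b; omega
    · apply le_trans (natDegree_mul_le)
      have := hqdeg a; omega

lemma Rep2.mul {f g : K} : Rep2 f → Rep2 g → Rep2 (f * g) := by
  rintro ⟨P, a, h, hd⟩ ⟨Q, b, h', hd'⟩
  refine ⟨P * Q, a + b, ?_, ?_⟩
  · rw [map_mul, pow_add, ← h, ← h']; ring
  · apply le_trans (natDegree_mul_le); omega

lemma Rep2.kc (c : ℂ) : Rep2 (kC c) := ⟨C c, 0, by simp [kC], by simp⟩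

lemma Rep12.mul {f g : K} : Rep12 f → Rep12 g → Rep12 (f * g) := by
  rintro ⟨P, a, b, h, hd⟩ ⟨Q, a', b', h', hd'⟩
  refine ⟨P * Q, a + a', b + b', ?_, ?_⟩
  · rw [map_mul, pow_add, pow_add, ← h, ← h']; ring
  · apply le_trans (natDegree_mul_le); omega

lemma yy_key : yy * (kC (2*Complex.I) * tt) = tt^2 + 1 := by
  have hrel : kC ((2*Complex.I)⁻¹) * kC (2*Complex.I) = 1 := by
    rw [← kC_mul, inv_mul_cancel₀ twoI_ne_zero, kC, map_one, map_one]
  rw [yy, am_py]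
  have h1 : kC ((2*Complex.I)⁻¹) * (tt ^ 2 + 1) / tt * (kC (2*Complex.I) * tt)
      = (kC ((2*Complex.I)⁻¹) * kC (2*Complex.I)) * (tt^2+1) * (tt / tt) := by ring
  rw [h1, div_self tt_ne_zero, hrel, one_mul, mul_one]

/-- 1/y -/
lemma Rep2.yinv : Rep2 yy⁻¹ := by
  refine ⟨C (2*Complex.I) * X, 1, ?_, ?_⟩
  · rw [pow_one, am_qq, map_mul, show (am X : K) = tt from rfl,
      show (am (C (2*Complex.I)) : K) = kC (2*Complex.I) from rfl]
    rw [← yy_key, inv_mul_cancel_left₀ yy_ne_zero]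
  · refine le_trans natDegree_mul_le ?_
    rw [natDegree_C, natDegree_X, zero_add]
    norm_num

lemma xy_key : yy * (kC Complex.I * (tt^2 - 1)) = xx * (tt^2 + 1) := by
  have hIrel : kC ((2*Complex.I)⁻¹) * kC Complex.I = kC 2⁻¹ := by
    rw [← kC_mul]
    congr 1
    rw [mul_comm]
    rw [mul_inv_eq_iff_eq_mul₀ twoI_ne_zero]
    field_simp
  rw [yy, xx, am_py, am_px]
  have h1 : kC ((2*Complex.I)⁻¹) * (tt ^ 2 + 1) / tt * (kC Complex.I * (tt^2-1))
      = (kC ((2*Complex.I)⁻¹) * kC Complex.I) * ((tt^2+1) * (tt^2-1) / tt) := by ring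
  rw [h1, hIrel]
  ring

/-- x/y -/
lemma Rep2.xy : Rep2 (xx * yy⁻¹) := by
  refine ⟨C Complex.I * (X^2 - 1), 1, ?_, ?_⟩
  · rw [pow_one, am_qq, map_mul, map_sub, map_pow, map_one,
      show (am X : K) = tt from rfl, show (am (C Complex.I) : K) = kC Complex.I from rfl]
    have : xx * yy⁻¹ * (tt^2+1) = yy⁻¹ * (xx * (tt^2+1)) := by ring
    rw [this, ← xy_key, inv_mul_cancel_left₀ yy_ne_zero]
  · apply le_trans (natDegree_mul_le)
    rw [natDegree_C, zero_add]
    refine le_trans (natDegree_sub_le _ _) ?_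
    simp

/-! ### membership: images of A1, A2, R12 have representations -/

lemma rep1_psi (p : MvPolynomial (Fin 2) ℝ) : Rep1 (psi p) := by
  induction p using MvPolynomial.induction_on with
  | C r => rw [psi_C]; exact Rep1.kc _
  | add p q hp hq => rw [map_add]; exact hp.add hq
  | mul_X p i hp =>
    rw [map_mul]
    apply hp.mul
    fin_cases i
    · show Rep1 (psi (MvPolynomial.X 0))
      rw [psi_X0]; exact Rep1.xx
    · show Rep1 (psi (MvPolynomial.X 1))
      rw [psi_X1]; exact Rep1.yy

lemma rep1_psi1 (r : R1) : Rep1 (psi1 r) := by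
  obtain ⟨p, rfl⟩ := Ideal.Quotient.mk_surjective (I := Irel) r
  rw [psi1_mk]
  exact rep1_psi p

lemma rep2_yinv_pow (n : ℕ) : Rep2 ((yy⁻¹)^n) := by
  induction n with
  | zero => exact ⟨1, 0, by simp, by simp⟩
  | succ m ih => rw [pow_succ]; exact Rep2.mul ih Rep2.yinv

lemma rep12_phi (z : R12) : Rep12 (phi z) := by
  obtain ⟨⟨r, s⟩, h⟩ := IsLocalization.surj (Submonoid.powers Y1) z
  obtain ⟨n, hn⟩ := s.2
  have h' : phi z * phi (algebraMap R1 R12 (s : R1)) = phi (algebraMap R1 R12 r) := by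
    rw [← map_mul, h]
  rw [phi_alg, phi_alg, ← hn, map_pow, psi1_Y] at h'
  have hz : phi z = psi1 r * (yy⁻¹)^n := by
    rw [← h', inv_pow, mul_inv_cancel_right₀ (pow_ne_zero n yy_ne_zero)]
  rw [hz]
  apply Rep12.mul (rep1_psi1 r).rep12
  exact (rep2_yinv_pow n).rep12

lemma rep1_A1 {z : R12} (hz : z ∈ A1) : Rep1 (phi z) := by
  have hz' : z ∈ Algebra.adjoin ℝ {X12, Y12} := hz
  induction hz' using Algebra.adjoin_induction with
  | mem x hx =>
    rcases hx with h | h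
    · rw [h, phi_X12]; exact Rep1.xx
    · rw [h, phi_Y12]; exact Rep1.yy
  | algebraMap r => rw [phi_real]; exact Rep1.kc _
  | add x y hx hy ihx ihy => rw [map_add]; exact Rep1.add (ihx hx) (ihy hy)
  | mul x y hx hy ihx ihy => rw [map_mul]; exact Rep1.mul (ihx hx) (ihy hy)

lemma rep2_A2 {z : R12} (hz : z ∈ A2) : Rep2 (phi z) := by
  have hz' : z ∈ Algebra.adjoin ℝ {X12 * (↑Yu⁻¹ : R12), ((Yu⁻¹ : R12ˣ) : R12)} := hz
  induction hz' using Algebra.adjoin_induction with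
  | mem x hx =>
    rcases hx with h | h
    · rw [h, map_mul, phi_X12, phi_Yuinv]; exact Rep2.xy
    · rw [h, phi_Yuinv]; exact Rep2.yinv
  | algebraMap r => rw [phi_real]; exact Rep2.kc _
  | add x y hx hy ihx ihy => rw [map_add]; exact Rep2.add (ihx hx) (ihy hy)
  | mul x y hx hy ihx ihy => rw [map_mul]; exact Rep2.mul (ihx hx) (ihy hy)


/-! ### root multiplicity computations -/

lemma rm_pow (a : ℂ) {p : Polynomial ℂ} (hp : p ≠ 0) (n : ℕ) :
    rootMultiplicity a (p^n) = n * rootMultiplicity a p := by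
  induction n with
  | zero => simpa using rm_one a
  | succ m ih =>
    rw [pow_succ, rootMultiplicity_mul (mul_ne_zero (pow_ne_zero m hp) hp), ih]
    ring

lemma rm_X_zero : rootMultiplicity (0:ℂ) (X : Polynomial ℂ) = 1 := by
  simpa using rootMultiplicity_X_sub_C_self (x := (0:ℂ))

lemma rm_X_I : rootMultiplicity Complex.I (X : Polynomial ℂ) = 0 :=
  rootMultiplicity_eq_zero (by simp [IsRoot, Complex.I_ne_zero])

lemma rm_X_negI : rootMultiplicity (-Complex.I) (X : Polynomial ℂ) = 0 :=
  rootMultiplicity_eq_zero (by simp [IsRoot, Complex.I_ne_zero])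

lemma qq_fac : (X - C Complex.I) * (X - C (-Complex.I)) = qq := by
  rw [qq, map_neg]
  have hII : (C Complex.I : Polynomial ℂ)^2 = -1 := by
    rw [← C_pow, Complex.I_sq, map_neg, map_one]
  linear_combination -hII

lemma rm_qq_zero : rootMultiplicity (0:ℂ) qq = 0 :=
  rootMultiplicity_eq_zero (by simp [IsRoot, qq])

lemma rm_qq_I : rootMultiplicity Complex.I qq = 1 := by
  rw [← qq_fac, rootMultiplicity_mul (by rw [qq_fac]; exact qq_ne_zero)]
  rw [rootMultiplicity_X_sub_C_self, rootMultiplicity_eq_zero (p := X - C (-Complex.I))]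
  simp only [IsRoot, eval_sub, eval_X, eval_C, sub_neg_eq_add]
  intro h
  have : Complex.I = 0 := by linear_combination h/2
  exact Complex.I_ne_zero this

lemma rm_qq_negI : rootMultiplicity (-Complex.I) qq = 1 := by
  rw [← qq_fac, rootMultiplicity_mul (by rw [qq_fac]; exact qq_ne_zero)]
  rw [rootMultiplicity_X_sub_C_self, rootMultiplicity_eq_zero (p := X - C Complex.I)]
  simp only [IsRoot, eval_sub, eval_X, eval_C]
  intro h
  have : Complex.I = 0 := by linear_combination -h/2
  exact Complex.I_ne_zero this

lemma rm_px_zero : rootMultiplicity (0:ℂ) px = 0 :=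
  rootMultiplicity_eq_zero (by simp [IsRoot, px])

lemma rm_px_I : rootMultiplicity Complex.I px = 0 := by
  apply rootMultiplicity_eq_zero
  simp only [IsRoot, px, eval_mul, eval_C, eval_sub, eval_pow, eval_X, eval_one, Complex.I_sq]
  norm_num

lemma rm_py_zero : rootMultiplicity (0:ℂ) py = 0 :=
  rootMultiplicity_eq_zero (by simp [IsRoot, py, twoI_ne_zero])

lemma py_eq : py = C ((2 * Complex.I)⁻¹) * qq := rfl

lemma rm_py_I : rootMultiplicity Complex.I py = 1 := by
  rw [py_eq, rootMultiplicity_mul (by rw [← py_eq]; exact py_ne_zero), rootMultiplicity_C,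
    rm_qq_I]

/-! ### ord values of xx and yy -/

lemma xx_rep' : xx * am X = am px := xx_rep
lemma yy_rep' : yy * am X = am py := yy_rep

lemma ord_xx_zero : ord 0 xx = -1 := by
  rw [ord_rep 0 X_ne_zero xx_rep' xx_ne_zero, rm_px_zero, rm_X_zero]
  norm_num

lemma ord_xx_I : ord Complex.I xx = 0 := by
  rw [ord_rep Complex.I X_ne_zero xx_rep' xx_ne_zero, rm_px_I, rm_X_I]
  norm_num

lemma ord_yy_zero : ord 0 yy = -1 := by
  rw [ord_rep 0 X_ne_zero yy_rep' yy_ne_zero, rm_py_zero, rm_X_zero]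
  norm_num

lemma ord_yy_I : ord Complex.I yy = 1 := by
  rw [ord_rep Complex.I X_ne_zero yy_rep' yy_ne_zero, rm_py_I, rm_X_I]
  norm_num

/-! ### the key numerical facts -/

lemma R1_nonneg {f : K} (h : Rep1 f) (hf : f ≠ 0) : 0 ≤ ord Complex.I f := by
  obtain ⟨P, a, hrep, hd⟩ := h
  rw [tt_pow] at hrep
  rw [ord_rep Complex.I (pow_ne_zero a X_ne_zero) hrep hf,
    rm_pow Complex.I X_ne_zero, rm_X_I]
  omega

lemma R2_nonneg {f : K} (h : Rep2 f) (hf : f ≠ 0) : 0 ≤ ord 0 f := by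
  obtain ⟨P, b, hrep, hd⟩ := h
  rw [amqq_pow] at hrep
  rw [ord_rep 0 (pow_ne_zero b qq_ne_zero) hrep hf,
    rm_pow 0 qq_ne_zero, rm_qq_zero]
  omega

/-- the global inequality: real elements of `R12` have `ord 0 + ord I ≤ 0`. -/
lemma glob {f : K} (h : Rep12 f) (hf : f ≠ 0) (hr : cj f = f) :
    ord 0 f + ord Complex.I f ≤ 0 := by
  obtain ⟨P, a, b, hrep, hd⟩ := h
  rw [tt_pow, amqq_pow, mul_assoc, ← map_mul] at hrep
  have hden : (X^a * qq^b : Polynomial ℂ) ≠ 0 :=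
    mul_ne_zero (pow_ne_zero a X_ne_zero) (pow_ne_zero b qq_ne_zero)
  have hP : P ≠ 0 := by
    intro h0; subst h0
    rw [map_zero] at hrep
    exact (mul_eq_zero.mp hrep).elim hf (fun hh => am_ne_zero hden hh)
  have h0 := ord_rep 0 hden hrep hf
  have hI := ord_rep Complex.I hden hrep hf
  have hmI := ord_rep (-Complex.I) hden hrep hf
  have hW := W_rep hden hrep hf
  rw [rootMultiplicity_mul hden, rm_pow 0 X_ne_zero, rm_pow 0 qq_ne_zero,
    rm_X_zero, rm_qq_zero] at h0
  rw [rootMultiplicity_mul hden, rm_pow Complex.I X_ne_zero, rm_pow Complex.I qq_ne_zero,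
    rm_X_I, rm_qq_I] at hI
  rw [rootMultiplicity_mul hden, rm_pow (-Complex.I) X_ne_zero, rm_pow (-Complex.I) qq_ne_zero,
    rm_X_negI, rm_qq_negI] at hmI
  rw [natDegree_mul (pow_ne_zero a X_ne_zero) (pow_ne_zero b qq_ne_zero),
    natDegree_X_pow, qq_pow_deg] at hW
  obtain ⟨hsym, hWsym⟩ := real_ord hf hr
  -- divisibility: X^(rm 0) * ((X-CI)^(rm I) * (X-C(-I))^(rm -I)) ∣ P
  have hcop1 : IsCoprime ((X : Polynomial ℂ) - C Complex.I) (X - C (-Complex.I)) := by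
    apply isCoprime_X_sub_C_of_isUnit_sub
    apply Ne.isUnit
    intro hcon
    rw [sub_eq_zero] at hcon
    exact Complex.I_ne_zero (by linear_combination hcon/2)
  have hcop2 : IsCoprime ((X : Polynomial ℂ) - C 0) (X - C Complex.I) := by
    apply isCoprime_X_sub_C_of_isUnit_sub
    exact Ne.isUnit (by simpa using Complex.I_ne_zero)
  have hcop3 : IsCoprime ((X : Polynomial ℂ) - C 0) (X - C (-Complex.I)) := by
    apply isCoprime_X_sub_C_of_isUnit_sub
    apply Ne.isUnit
    simpa using Complex.I_ne_zero
  have hdvd : ((X - C 0)^(P.rootMultiplicity 0) *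
      ((X - C Complex.I)^(P.rootMultiplicity Complex.I) *
       (X - C (-Complex.I))^(P.rootMultiplicity (-Complex.I)))) ∣ P := by
    apply IsCoprime.mul_dvd
    · exact IsCoprime.mul_right (IsCoprime.pow hcop2) (IsCoprime.pow hcop3)
    · exact pow_rootMultiplicity_dvd P 0
    · exact IsCoprime.mul_dvd (IsCoprime.pow hcop1)
        (pow_rootMultiplicity_dvd P Complex.I) (pow_rootMultiplicity_dvd P (-Complex.I))
  have hdeg := natDegree_le_of_dvd hdvd hP
  rw [natDegree_mul (pow_ne_zero _ (X_sub_C_ne_zero 0))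
      (mul_ne_zero (pow_ne_zero _ (X_sub_C_ne_zero _)) (pow_ne_zero _ (X_sub_C_ne_zero _))),
    natDegree_mul (pow_ne_zero _ (X_sub_C_ne_zero _)) (pow_ne_zero _ (X_sub_C_ne_zero _)),
    natDegree_pow, natDegree_pow, natDegree_pow] at hdeg
  simp only [natDegree_X_sub_C, mul_one] at hdeg
  omega

/-- real nonzero elements with a `Rep1` representation and `ord 0 = 0` are real constants. -/
lemma R1_const {f : K} (h : Rep1 f) (hf : f ≠ 0) (hr : cj f = f) (h0 : ord 0 f = 0) :
    ∃ γ : ℝ, f = kC γ := by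
  obtain ⟨P, a, hrep, hd⟩ := h
  rw [tt_pow] at hrep
  have hP : P ≠ 0 := by
    intro h0'; subst h0'
    rw [map_zero] at hrep
    exact (mul_eq_zero.mp hrep).elim hf (fun hh => am_ne_zero (pow_ne_zero a X_ne_zero) hh)
  have hord := ord_rep 0 (pow_ne_zero a X_ne_zero) hrep hf
  have hW := W_rep (pow_ne_zero a X_ne_zero) hrep hf
  rw [rm_pow 0 X_ne_zero, rm_X_zero] at hord
  rw [natDegree_X_pow] at hW
  obtain ⟨_, hWsym⟩ := real_ord hf hr
  -- rm 0 P = a and deg P = a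
  have hrm : P.rootMultiplicity 0 = a := by omega
  have hdeg : P.natDegree = a := by omega
  have hdvd : ((X : Polynomial ℂ))^a ∣ P := by
    have := pow_rootMultiplicity_dvd P 0
    rw [hrm] at this
    simpa using this
  obtain ⟨Q, hQ⟩ := hdvd
  have hQne : Q ≠ 0 := by rintro rfl; rw [mul_zero] at hQ; exact hP hQ
  have hQdeg : Q.natDegree = 0 := by
    have := natDegree_mul (pow_ne_zero a (X_ne_zero (R := ℂ))) hQne
    rw [← hQ, natDegree_X_pow, hdeg] at this
    omega
  obtain ⟨κ, hκ⟩ := natDegree_eq_zero.mp hQdeg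
  have hfκ : f = kC κ := by
    have hXa : (am (X^a) : K) ≠ 0 := am_ne_zero (pow_ne_zero a X_ne_zero)
    have : f * am (X^a) = kC κ * am (X^a) := by
      rw [hrep, hQ, ← hκ, map_mul, mul_comm]
      rfl
    exact mul_right_cancel₀ hXa this
  have hκreal : (starRingEnd ℂ) κ = κ := by
    have := hr
    rw [hfκ, cj_kC] at this
    exact kC_inj this
  exact ⟨κ.re, by rw [hfκ, Complex.conj_eq_iff_re.mp hκreal]⟩

/-- real nonzero elements with a `Rep2` representation, `ord 0 = 0` and `ord I = 0`
are real constants. -/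
lemma R2_const {f : K} (h : Rep2 f) (hf : f ≠ 0) (hr : cj f = f)
    (h0 : ord 0 f = 0) (hI : ord Complex.I f = 0) :
    ∃ γ : ℝ, f = kC γ := by
  obtain ⟨P, b, hrep, hd⟩ := h
  rw [amqq_pow] at hrep
  have hden := pow_ne_zero b (qq_ne_zero)
  have hP : P ≠ 0 := by
    intro h0'; subst h0'
    rw [map_zero] at hrep
    exact (mul_eq_zero.mp hrep).elim hf (fun hh => am_ne_zero hden hh)
  have hord0 := ord_rep 0 hden hrep hf
  have hordI := ord_rep Complex.I hden hrep hf
  have hordmI := ord_rep (-Complex.I) hden hrep hf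
  have hW := W_rep hden hrep hf
  rw [rm_pow 0 qq_ne_zero, rm_qq_zero] at hord0
  rw [rm_pow Complex.I qq_ne_zero, rm_qq_I] at hordI
  rw [rm_pow (-Complex.I) qq_ne_zero, rm_qq_negI] at hordmI
  rw [qq_pow_deg] at hW
  obtain ⟨hsym, hWsym⟩ := real_ord hf hr
  have hrmI : P.rootMultiplicity Complex.I = b := by omega
  have hrmmI : P.rootMultiplicity (-Complex.I) = b := by omega
  have hdeg : P.natDegree = 2*b := by omega
  have hcop1 : IsCoprime ((X : Polynomial ℂ) - C Complex.I) (X - C (-Complex.I)) := by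
    apply isCoprime_X_sub_C_of_isUnit_sub
    apply Ne.isUnit
    intro hcon
    rw [sub_eq_zero] at hcon
    exact Complex.I_ne_zero (by linear_combination hcon/2)
  have hdvd : qq^b ∣ P := by
    have h1 : ((X - C Complex.I)^b * (X - C (-Complex.I))^b : Polynomial ℂ) ∣ P := by
      apply IsCoprime.mul_dvd (IsCoprime.pow hcop1)
      · have := pow_rootMultiplicity_dvd P Complex.I
        rwa [hrmI] at this
      · have := pow_rootMultiplicity_dvd P (-Complex.I)
        rwa [hrmmI] at this
    rwa [← mul_pow, qq_fac] at h1
  obtain ⟨Q, hQ⟩ := hdvd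
  have hQne : Q ≠ 0 := by rintro rfl; rw [mul_zero] at hQ; exact hP hQ
  have hQdeg : Q.natDegree = 0 := by
    have := natDegree_mul (pow_ne_zero b qq_ne_zero) hQne
    rw [← hQ, qq_pow_deg, hdeg] at this
    omega
  obtain ⟨κ, hκ⟩ := natDegree_eq_zero.mp hQdeg
  have hfκ : f = kC κ := by
    have hQQ : (am (qq^b) : K) ≠ 0 := am_ne_zero hden
    have : f * am (qq^b) = kC κ * am (qq^b) := by
      rw [hrep, hQ, ← hκ, map_mul, mul_comm]
      rfl
    exact mul_right_cancel₀ hQQ this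
  have hκreal : (starRingEnd ℂ) κ = κ := by
    have := hr
    rw [hfκ, cj_kC] at this
    exact kC_inj this
  exact ⟨κ.re, by rw [hfκ, Complex.conj_eq_iff_re.mp hκreal]⟩


/-! ### linear independence of 1, x, y -/

lemma twoI_inv : ((2 * Complex.I)⁻¹ : ℂ) = -Complex.I/2 := by
  have h : (2*Complex.I) * (-Complex.I/2) = 1 := by linear_combination -Complex.I_mul_I
  exact inv_eq_of_mul_eq_one_right h

lemma indep {γ1 γ2 γ3 : ℝ} (h : kC ↑γ1 * xx + kC ↑γ2 + kC ↑γ3 * yy = 0) : γ1 = 0 := by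
  have h' : am (C (γ1:ℂ) * px + C (γ2:ℂ) * X + C (γ3:ℂ) * py) = 0 := by
    rw [map_add, map_add, map_mul, map_mul, map_mul]
    have e1 : (am (C (γ1:ℂ)) : K) = kC ↑γ1 := rfl
    have e2 : (am (C (γ2:ℂ)) : K) = kC ↑γ2 := rfl
    have e3 : (am (C (γ3:ℂ)) : K) = kC ↑γ3 := rfl
    rw [e1, e2, e3, ← xx_rep', ← yy_rep', show (am X : K) = tt from rfl]
    calc kC ↑γ1 * (xx * tt) + kC ↑γ2 * tt + kC ↑γ3 * (yy * tt)
        = (kC ↑γ1 * xx + kC ↑γ2 + kC ↑γ3 * yy) * tt := by ring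
    _ = 0 := by rw [h, zero_mul]
  have hp : (C (γ1:ℂ) * px + C (γ2:ℂ) * X + C (γ3:ℂ) * py) = 0 := by
    apply am_inj
    rw [h', map_zero]
  have e0 := congrArg (Polynomial.eval 0) hp
  simp only [eval_add, eval_mul, eval_C, eval_X, px, py, eval_sub, eval_pow, eval_one,
    eval_zero, mul_zero, add_zero, zero_add, mul_one] at e0
  -- e0 : γ1 * (2⁻¹ * (0^2 - 1)) + γ3 * ((2I)⁻¹ * (0^2+1)) = 0
  rw [twoI_inv] at e0
  have hre := congrArg Complex.re e0
  simp [Complex.add_re, Complex.mul_re, Complex.ofReal_re, Complex.ofReal_im,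
    Complex.I_re, Complex.I_im, Complex.div_re] at hre
  -- extract γ1 = 0
  norm_num at hre
  linarith [hre]

/-! ### the row bound -/

lemma row_bound {l1 l2 b1 b2 d : K}
    (hl1r : Rep2 l1) (hl2r : Rep2 l2) (hb1r : Rep1 b1) (hb2r : Rep1 b2)
    (hl1c : cj l1 = l1) (hl2c : cj l2 = l2) (hb1c : cj b1 = b1) (hb2c : cj b2 = b2)
    (hd : d ≠ 0) (hdu : ord 0 d = - ord Complex.I d)
    (hl : ¬(l1 = 0 ∧ l2 = 0))
    (F1 : -(yy * l1) = d * b1)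
    (F2 : xx * l1 + l2 = d * b2) :
    ord Complex.I d ≤ 0 := by
  by_contra hn
  push_neg at hn
  by_cases hl1 : l1 = 0
  · -- first case : l2 = d * b2 with l2 ≠ 0
    have hl2 : l2 ≠ 0 := fun h => hl ⟨hl1, h⟩
    rw [hl1, mul_zero, zero_add] at F2
    have hb2 : b2 ≠ 0 := by
      rintro rfl
      rw [mul_zero] at F2
      exact hl2 F2
    have h02 : ord 0 l2 = ord 0 d + ord 0 b2 := by rw [F2]; exact ord_mul 0 hd hb2
    have hub2 : 0 ≤ ord 0 l2 := R2_nonneg hl2r hl2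
    have hg2 := glob (Rep1.rep12 hb2r) hb2 hb2c
    have hp2 := R1_nonneg hb2r hb2
    omega
  · -- l1 ≠ 0
    have hyl1 : yy * l1 ≠ 0 := mul_ne_zero yy_ne_zero hl1
    have hnyl1 : -(yy * l1) ≠ 0 := neg_ne_zero.mpr hyl1
    have hb1 : b1 ≠ 0 := by
      rintro rfl
      rw [mul_zero] at F1
      exact hnyl1 F1
    have hu1 : ord 0 yy + ord 0 l1 = ord 0 d + ord 0 b1 := by
      have h1 : ord 0 (-(yy * l1)) = ord 0 d + ord 0 b1 := by rw [F1]; exact ord_mul 0 hd hb1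
      rw [ord_neg 0 hyl1, ord_mul 0 yy_ne_zero hl1] at h1
      exact h1
    have hp1 : ord Complex.I yy + ord Complex.I l1 = ord Complex.I d + ord Complex.I b1 := by
      have h1 : ord Complex.I (-(yy * l1)) = ord Complex.I d + ord Complex.I b1 := by
        rw [F1]; exact ord_mul Complex.I hd hb1
      rw [ord_neg Complex.I hyl1, ord_mul Complex.I yy_ne_zero hl1] at h1
      exact h1
    rw [ord_yy_zero] at hu1
    rw [ord_yy_I] at hp1
    have hul1 : 0 ≤ ord 0 l1 := R2_nonneg hl1r hl1
    have hgl1 := glob (Rep2.rep12 hl1r) hl1 hl1c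
    have hpb1 : 0 ≤ ord Complex.I b1 := R1_nonneg hb1r hb1
    have hgb1 := glob (Rep1.rep12 hb1r) hb1 hb1c
    -- deduce n = 1 and all orders vanish
    have hn1 : ord Complex.I d = 1 := by omega
    have hul10 : ord 0 l1 = 0 := by omega
    have hpl10 : ord Complex.I l1 = 0 := by omega
    have hub10 : ord 0 b1 = 0 := by omega
    obtain ⟨γ1, hγ1⟩ := R2_const hl1r hl1 hl1c hul10 hpl10
    obtain ⟨β1, hβ1⟩ := R1_const hb1r hb1 hb1c hub10
    have hγ1ne : (γ1:ℂ) ≠ 0 := fun h => hl1 (by rw [hγ1, h, kC, map_zero, map_zero])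
    have hβ1ne : (β1:ℂ) ≠ 0 := fun h => hb1 (by rw [hβ1, h, kC, map_zero, map_zero])
    -- analyze F2
    have hxl1 : xx * l1 ≠ 0 := mul_ne_zero xx_ne_zero hl1
    have huxl1 : ord 0 (xx * l1) = -1 := by
      rw [ord_mul 0 xx_ne_zero hl1, ord_xx_zero, hul10]
      norm_num
    have hpxl1 : ord Complex.I (xx * l1) = 0 := by
      rw [ord_mul Complex.I xx_ne_zero hl1, ord_xx_I, hpl10]
      norm_num
    by_cases hl2 : l2 = 0
    · -- xx * l1 = d * b2
      rw [hl2, add_zero] at F2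
      have hb2 : b2 ≠ 0 := by
        rintro rfl
        rw [mul_zero] at F2
        exact hxl1 F2
      have h1 : ord Complex.I (xx * l1) = ord Complex.I d + ord Complex.I b2 := by
        rw [F2]; exact ord_mul Complex.I hd hb2
      have hpb2 : 0 ≤ ord Complex.I b2 := R1_nonneg hb2r hb2
      omega
    · by_cases hb2 : b2 = 0
      · -- l2 = -(xx*l1)
        rw [hb2, mul_zero] at F2
        have hl2e : l2 = -(xx * l1) := by linear_combination F2
        have : ord 0 l2 = -1 := by rw [hl2e, ord_neg 0 hxl1, huxl1]
        have := R2_nonneg hl2r hl2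
        omega
      · -- generic case
        have hul2 : 0 ≤ ord 0 l2 := R2_nonneg hl2r hl2
        have hgl2 := glob (Rep2.rep12 hl2r) hl2 hl2c
        have hLHS : ord 0 (xx * l1 + l2) = -1 := by
          rw [ord_add_eq 0 hxl1 hl2 (by omega), huxl1]
        have hdb2 : ord 0 (d * b2) = ord 0 d + ord 0 b2 := ord_mul 0 hd hb2
        rw [F2] at hLHS
        have hpb2 : 0 ≤ ord Complex.I b2 := R1_nonneg hb2r hb2
        have hgb2 := glob (Rep1.rep12 hb2r) hb2 hb2c
        have hub20 : ord 0 b2 = 0 := by omega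
        have hpb20 : ord Complex.I b2 = 0 := by omega
        -- ord I of both sides of F2
        have hpRHS : ord Complex.I (d * b2) = 1 := by
          rw [ord_mul Complex.I hd hb2, hn1, hpb20]
          norm_num
        have hpl2 : ord Complex.I l2 = 0 := by
          by_contra hne
          have hlt : ord Complex.I l2 < ord Complex.I (xx * l1) := by omega
          have : ord Complex.I (l2 + xx * l1) = ord Complex.I l2 :=
            ord_add_eq Complex.I hl2 hxl1 hlt
          rw [add_comm, F2, hpRHS] at this
          omega
        have hul20 : ord 0 l2 = 0 := by omega
        obtain ⟨γ2, hγ2⟩ := R2_const hl2r hl2 hl2c hul20 hpl2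
        obtain ⟨β2, hβ2⟩ := R1_const hb2r hb2 hb2c hub20
        -- final contradiction via linear independence
        have E : kC ↑(γ1*β1) * xx + kC ↑(γ2*β1) + kC ↑(γ1*β2) * yy = 0 := by
          have c1 : kC ↑(γ1*β1) = kC ↑γ1 * kC ↑β1 := by
            rw [← kC_mul]; norm_cast
          have c2 : kC ↑(γ2*β1) = kC ↑γ2 * kC ↑β1 := by
            rw [← kC_mul]; norm_cast
          have c3 : kC ↑(γ1*β2) = kC ↑γ1 * kC ↑β2 := by
            rw [← kC_mul]; norm_cast
          rw [c1, c2, c3]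
          rw [hγ1, hβ1] at F1
          rw [hγ1, hγ2, hβ2] at F2
          linear_combination (kC ↑β1) * F2 - (kC ↑β2) * F1
        have := indep E
        have : γ1 * β1 = 0 := this
        rcases mul_eq_zero.mp this with h | h
        · exact hγ1ne (by exact_mod_cast h)
        · exact hβ1ne (by exact_mod_cast h)

end St10

open St10 in
/-- there do not exist `2×2` matrices `L` and `R`, invertible over `R₁₂`,
with all entries of `L, L⁻¹` in `A₂` and all entries of `R, R⁻¹` in `A₁`, such that
`L·M_Q·R` is diagonal.  (The Quillen bundle is indecomposable.) -/
theorem statement_10 :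
    ¬ ∃ L Linv R Rinv : Matrix (Fin 2) (Fin 2) R12,
        L * Linv = 1 ∧ Linv * L = 1 ∧ R * Rinv = 1 ∧ Rinv * R = 1 ∧
        (∀ i j, L i j ∈ A2 ∧ Linv i j ∈ A2) ∧
        (∀ i j, R i j ∈ A1 ∧ Rinv i j ∈ A1) ∧
        (L * MQ * R).IsDiag := by
  rintro ⟨L, Linv, R, Rinv, hLL, hLinvL, hRR, hRinvR, hL2, hR1, hdiag⟩
  classical
  have hD01 : (L * MQ * R) 0 1 = 0 := hdiag (by decide)
  have hD10 : (L * MQ * R) 1 0 = 0 := hdiag (by decide)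
  have hYu : ((Yu : R12ˣ) : R12) = Y12 := IsUnit.unit_spec _
  have hYY : Y12 * ((Yu⁻¹ : R12ˣ) : R12) = 1 := by rw [← hYu]; exact Units.mul_inv Yu
  -- right inverse of MQ
  have hMQ1 : MQ * !![-((Yu⁻¹ : R12ˣ) : R12), ((Yu⁻¹ : R12ˣ) : R12) * X12; 0, 1] = 1 := by
    rw [MQ, Matrix.mul_fin_two, Matrix.one_fin_two]
    have e11 : -Y12 * -((Yu⁻¹ : R12ˣ) : R12) + X12 * 0 = 1 := by linear_combination hYY
    have e12 : -Y12 * (((Yu⁻¹ : R12ˣ) : R12) * X12) + X12 * 1 = 0 := by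
      linear_combination (-X12) * hYY
    have e21 : (0:R12) * -((Yu⁻¹ : R12ˣ) : R12) + 1 * 0 = 0 := by ring
    have e22 : (0:R12) * (((Yu⁻¹ : R12ˣ) : R12) * X12) + 1 * 1 = 1 := by ring
    rw [e11, e12, e21, e22]
  -- global inverse of D := L*MQ*R
  have hDE : (L * MQ * R) * ((Rinv * !![-((Yu⁻¹ : R12ˣ) : R12), ((Yu⁻¹ : R12ˣ) : R12) * X12; 0, 1]) * Linv) = 1 := by
    have h1 : (L * MQ * R) * ((Rinv * !![-((Yu⁻¹ : R12ˣ) : R12), ((Yu⁻¹ : R12ˣ) : R12) * X12; 0, 1]) * Linv)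
        = L * MQ * (R * Rinv) * !![-((Yu⁻¹ : R12ˣ) : R12), ((Yu⁻¹ : R12ˣ) : R12) * X12; 0, 1] * Linv := by
      simp only [mul_assoc]
    rw [h1, hRR, mul_one, mul_assoc L MQ _, hMQ1, mul_one, hLL]
  -- unit data for the diagonal entries
  have unit_ord : ∀ d e : R12, phi d * phi e = 1 →
      phi d ≠ 0 ∧ ord 0 (phi d) = - ord Complex.I (phi d) := by
    intro d e hK
    have hdne : phi d ≠ 0 := left_ne_zero_of_mul_eq_one hK
    have hene : phi e ≠ 0 := right_ne_zero_of_mul_eq_one hK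
    refine ⟨hdne, ?_⟩
    have hg1 := glob (rep12_phi d) hdne (cj_phi _)
    have hg2 := glob (rep12_phi e) hene (cj_phi _)
    have hs0 : ord 0 (phi d) + ord 0 (phi e) = 0 := by
      rw [← ord_mul 0 hdne hene, hK, ord_one]
    have hsI : ord Complex.I (phi d) + ord Complex.I (phi e) = 0 := by
      rw [← ord_mul Complex.I hdne hene, hK, ord_one]
    omega
  have hprod0 : (L * MQ * R) 0 0 *
      ((Rinv * !![-((Yu⁻¹ : R12ˣ) : R12), ((Yu⁻¹ : R12ˣ) : R12) * X12; 0, 1]) * Linv) 0 0 = 1 := by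
    have h := congrFun (congrFun hDE 0) 0
    rw [Matrix.mul_apply, Fin.sum_univ_two, hD01, zero_mul, add_zero, Matrix.one_apply_eq] at h
    exact h
  have hprod1 : (L * MQ * R) 1 1 *
      ((Rinv * !![-((Yu⁻¹ : R12ˣ) : R12), ((Yu⁻¹ : R12ˣ) : R12) * X12; 0, 1]) * Linv) 1 1 = 1 := by
    have h := congrFun (congrFun hDE 1) 1
    rw [Matrix.mul_apply, Fin.sum_univ_two, hD10, zero_mul, zero_add, Matrix.one_apply_eq] at h
    exact h
  have hunit0 := unit_ord _ _ (by rw [← map_mul, hprod0, map_one])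
  have hunit1 := unit_ord _ _ (by rw [← map_mul, hprod1, map_one])
  -- row equations : D * Rinv = L * MQ
  have hRow : (L * MQ * R) * Rinv = L * MQ := by rw [mul_assoc, hRR, mul_one]
  have hMQ00 : MQ 0 0 = -Y12 := rfl
  have hMQ10 : MQ 1 0 = 0 := rfl
  have hMQ01 : MQ 0 1 = X12 := rfl
  have hMQ11 : MQ 1 1 = 1 := rfl
  have hLMQ : ∀ i : Fin 2, (L * MQ) i 0 = L i 0 * (-Y12) + L i 1 * 0 ∧
      (L * MQ) i 1 = L i 0 * X12 + L i 1 * 1 := by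
    intro i
    constructor
    · rw [Matrix.mul_apply, Fin.sum_univ_two, hMQ00, hMQ10]
    · rw [Matrix.mul_apply, Fin.sum_univ_two, hMQ01, hMQ11]
  have hDR0 : ∀ j : Fin 2, ((L * MQ * R) * Rinv) 0 j = (L * MQ * R) 0 0 * Rinv 0 j := by
    intro j
    rw [Matrix.mul_apply, Fin.sum_univ_two, hD01, zero_mul, add_zero]
  have hDR1 : ∀ j : Fin 2, ((L * MQ * R) * Rinv) 1 j = (L * MQ * R) 1 1 * Rinv 1 j := by
    intro j
    rw [Matrix.mul_apply, Fin.sum_univ_two, hD10, zero_mul, zero_add]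
  -- nonvanishing of rows of L (in K)
  have hlne : ∀ i : Fin 2, ¬(phi (L i 0) = 0 ∧ phi (L i 1) = 0) := by
    rintro i ⟨hz0, hz1⟩
    have h := congrFun (congrFun hLL i) i
    rw [Matrix.mul_apply, Fin.sum_univ_two, Matrix.one_apply_eq] at h
    have h2 := congrArg phi h
    rw [map_add, map_mul, map_mul, hz0, hz1, zero_mul, zero_mul, add_zero, map_one] at h2
    exact zero_ne_one h2
  -- the row bound, instantiated at i = 0 and i = 1
  have hbound0 : ord Complex.I (phi ((L * MQ * R) 0 0)) ≤ 0 := by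
    have hS1 : L 0 0 * (-Y12) + L 0 1 * 0 = (L * MQ * R) 0 0 * Rinv 0 0 := by
      rw [← (hLMQ 0).1, ← hDR0 0, hRow]
    have hS2 : L 0 0 * X12 + L 0 1 * 1 = (L * MQ * R) 0 0 * Rinv 0 1 := by
      rw [← (hLMQ 0).2, ← hDR0 1, hRow]
    have hF1 : -(yy * phi (L 0 0)) = phi ((L * MQ * R) 0 0) * phi (Rinv 0 0) := by
      have h := congrArg phi hS1
      rw [map_add, map_mul, map_mul, map_mul, map_neg, phi_Y12, map_zero] at h
      linear_combination h
    have hF2 : xx * phi (L 0 0) + phi (L 0 1) = phi ((L * MQ * R) 0 0) * phi (Rinv 0 1) := by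
      have h := congrArg phi hS2
      rw [map_add, map_mul, map_mul, map_mul, map_one, phi_X12] at h
      linear_combination h
    exact row_bound (rep2_A2 (hL2 0 0).1) (rep2_A2 (hL2 0 1).1)
      (rep1_A1 (hR1 0 0).2) (rep1_A1 (hR1 0 1).2)
      (cj_phi _) (cj_phi _) (cj_phi _) (cj_phi _)
      hunit0.1 hunit0.2 (hlne 0) hF1 hF2
  have hbound1 : ord Complex.I (phi ((L * MQ * R) 1 1)) ≤ 0 := by
    have hS1 : L 1 0 * (-Y12) + L 1 1 * 0 = (L * MQ * R) 1 1 * Rinv 1 0 := by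
      rw [← (hLMQ 1).1, ← hDR1 0, hRow]
    have hS2 : L 1 0 * X12 + L 1 1 * 1 = (L * MQ * R) 1 1 * Rinv 1 1 := by
      rw [← (hLMQ 1).2, ← hDR1 1, hRow]
    have hF1 : -(yy * phi (L 1 0)) = phi ((L * MQ * R) 1 1) * phi (Rinv 1 0) := by
      have h := congrArg phi hS1
      rw [map_add, map_mul, map_mul, map_mul, map_neg, phi_Y12, map_zero] at h
      linear_combination h
    have hF2 : xx * phi (L 1 0) + phi (L 1 1) = phi ((L * MQ * R) 1 1) * phi (Rinv 1 1) := by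
      have h := congrArg phi hS2
      rw [map_add, map_mul, map_mul, map_mul, map_one, phi_X12] at h
      linear_combination h
    exact row_bound (rep2_A2 (hL2 1 0).1) (rep2_A2 (hL2 1 1).1)
      (rep1_A1 (hR1 1 0).2) (rep1_A1 (hR1 1 1).2)
      (cj_phi _) (cj_phi _) (cj_phi _) (cj_phi _)
      hunit1.1 hunit1.2 (hlne 1) hF1 hF2
  -- determinant computation
  have hMQdet : MQ.det = -Y12 := by
    rw [MQ, Matrix.det_fin_two_of]
    ring
  have hdet1 : (L * MQ * R).det = L.det * (-Y12 * R.det) := by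
    rw [Matrix.det_mul, Matrix.det_mul, hMQdet]
    ring
  have hdet2 : (L * MQ * R).det = (L * MQ * R) 0 0 * (L * MQ * R) 1 1 := by
    rw [Matrix.det_fin_two, hD01, hD10]
    ring
  have hdetL : L.det * Linv.det = 1 := by rw [← Matrix.det_mul, hLL, Matrix.det_one]
  have hdetR : R.det * Rinv.det = 1 := by rw [← Matrix.det_mul, hRR, Matrix.det_one]
  have hdetLmem : L.det ∈ A2 := by
    rw [Matrix.det_fin_two]
    exact sub_mem (mul_mem (hL2 0 0).1 (hL2 1 1).1) (mul_mem (hL2 0 1).1 (hL2 1 0).1)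
  have hdetLinvmem : Linv.det ∈ A2 := by
    rw [Matrix.det_fin_two]
    exact sub_mem (mul_mem (hL2 0 0).2 (hL2 1 1).2) (mul_mem (hL2 0 1).2 (hL2 1 0).2)
  have hdetRmem : R.det ∈ A1 := by
    rw [Matrix.det_fin_two]
    exact sub_mem (mul_mem (hR1 0 0).1 (hR1 1 1).1) (mul_mem (hR1 0 1).1 (hR1 1 0).1)
  have hdetRinvmem : Rinv.det ∈ A1 := by
    rw [Matrix.det_fin_two]
    exact sub_mem (mul_mem (hR1 0 0).2 (hR1 1 1).2) (mul_mem (hR1 0 1).2 (hR1 1 0).2)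
  have hKdetL : phi L.det * phi Linv.det = 1 := by rw [← map_mul, hdetL, map_one]
  have hKdetR : phi R.det * phi Rinv.det = 1 := by rw [← map_mul, hdetR, map_one]
  have hLne : phi L.det ≠ 0 := left_ne_zero_of_mul_eq_one hKdetL
  have hLine : phi Linv.det ≠ 0 := right_ne_zero_of_mul_eq_one hKdetL
  have hRne : phi R.det ≠ 0 := left_ne_zero_of_mul_eq_one hKdetR
  have hRine : phi Rinv.det ≠ 0 := right_ne_zero_of_mul_eq_one hKdetR
  have horddetL : ord Complex.I (phi L.det) = 0 := by
    have h1 : 0 ≤ ord 0 (phi L.det) := R2_nonneg (rep2_A2 hdetLmem) hLne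
    have h2 : 0 ≤ ord 0 (phi Linv.det) := R2_nonneg (rep2_A2 hdetLinvmem) hLine
    have hs0 : ord 0 (phi L.det) + ord 0 (phi Linv.det) = 0 := by
      rw [← ord_mul 0 hLne hLine, hKdetL, ord_one]
    have hg1 := glob (rep12_phi L.det) hLne (cj_phi _)
    have hg2 := glob (rep12_phi Linv.det) hLine (cj_phi _)
    have hsI : ord Complex.I (phi L.det) + ord Complex.I (phi Linv.det) = 0 := by
      rw [← ord_mul Complex.I hLne hLine, hKdetL, ord_one]
    omega
  have horddetR : ord Complex.I (phi R.det) = 0 := by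
    have h1 : 0 ≤ ord Complex.I (phi R.det) := R1_nonneg (rep1_A1 hdetRmem) hRne
    have h2 : 0 ≤ ord Complex.I (phi Rinv.det) := R1_nonneg (rep1_A1 hdetRinvmem) hRine
    have hsI : ord Complex.I (phi R.det) + ord Complex.I (phi Rinv.det) = 0 := by
      rw [← ord_mul Complex.I hRne hRine, hKdetR, ord_one]
    omega
  have hd1ne := hunit0.1
  have hd2ne := hunit1.1
  have hKdet : phi ((L * MQ * R) 0 0) * phi ((L * MQ * R) 1 1)
      = phi L.det * (-yy * phi R.det) := by
    have h := congrArg phi (hdet2.symm.trans hdet1)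
    rw [map_mul, map_mul, map_mul, map_neg, phi_Y12] at h
    exact h
  have hyyRne : (-yy * phi R.det : K) ≠ 0 := mul_ne_zero (neg_ne_zero.mpr yy_ne_zero) hRne
  have hsum : ord Complex.I (phi ((L * MQ * R) 0 0)) + ord Complex.I (phi ((L * MQ * R) 1 1)) = 1 := by
    rw [← ord_mul Complex.I hd1ne hd2ne, hKdet,
      ord_mul Complex.I hLne hyyRne, ord_mul Complex.I (neg_ne_zero.mpr yy_ne_zero) hRne,
      ord_neg Complex.I yy_ne_zero, ord_yy_I, horddetL, horddetR]
    ring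
  omega
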